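/- Post-selected effective map of the two-qubit weak-measurement step: Let S = {1, 2, 3}, G_1, G_2, G_3 ∈ ℂ^{N×N}, Ω := Σ_{α∈S} ( e_α e_0† ⊗ G_α − e_0 e_α† ⊗ G_α† ), R² := Σ_{α∈S} G_α† G_α, U := exp(Ω), Ξ := I − (1/2) R² + (1/24)(R²)², Λ := I − (1/6) R². Let ξ_1, ξ_2 ∈ {0, +√3, −√3}, set ξ_3 := ξ_1² − 1, let α₀ := (1 + ξ_1² + ξ_3²/2 + ξ_2²)^{1/2}, and define the ancilla state m := (1/α₀)( e_0 + ξ_1 e_1 + (ξ_3/√2) e_2 + ξ_2 e_3 ). Define the post-selected effective map F̃ := α₀ · (m† ⊗ I_N) U (e_0 ⊗ I_N), i.e. F̃ = ⟨m| U |e_0⟩ / ⟨m|e_0⟩ as an N × N matrix. Then there exists a universal constant C > 0 such that, whenever g := max_α ‖G_α‖ ≤ 1: ‖ F̃ − [ Ξ + ξ_1 G_1 Λ + (ξ_3/√2) G_2 Λ + ξ_2 G_3 Λ ] ‖ ≤ C · g⁵. -/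

import Mathlib

open Matrix Kronecker

/-- The ℓ²→ℓ² operator norm of a complex matrix. -/
noncomputable def matOpNorm {n : Type*} [Fintype n] [DecidableEq n]
    (A : Matrix n n ℂ) : ℝ :=
  ‖Matrix.toEuclideanCLM (𝕜 := ℂ) A‖

noncomputable def repIntGen {S : Type*} [Fintype S] [DecidableEq S] {N : ℕ}
    (G : S → Matrix (Fin N) (Fin N) ℂ) :
    Matrix (Option S × Fin N) (Option S × Fin N) ℂ :=
  ∑ α : S,
    (Matrix.single (some α) (none : Option S) (1 : ℂ) ⊗ₖ G α -
      Matrix.single (none : Option S) (some α) (1 : ℂ) ⊗ₖ (G α)ᴴ)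

noncomputable def repIntR2 {S : Type*} [Fintype S] {N : ℕ}
    (G : S → Matrix (Fin N) (Fin N) ℂ) : Matrix (Fin N) (Fin N) ℂ :=
  ∑ α : S, (G α)ᴴ * G α

noncomputable def repIntXi {S : Type*} [Fintype S] {N : ℕ}
    (G : S → Matrix (Fin N) (Fin N) ℂ) : Matrix (Fin N) (Fin N) ℂ :=
  1 - (1 / 2 : ℂ) • repIntR2 G + (1 / 24 : ℂ) • (repIntR2 G * repIntR2 G)

noncomputable def repIntLam {S : Type*} [Fintype S] {N : ℕ}
    (G : S → Matrix (Fin N) (Fin N) ℂ) : Matrix (Fin N) (Fin N) ℂ :=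
  1 - (1 / 6 : ℂ) • repIntR2 G

noncomputable def gMax {S : Type*} [Fintype S] [Nonempty S] {N : ℕ}
    (G : S → Matrix (Fin N) (Fin N) ℂ) : ℝ :=
  Finset.univ.sup' Finset.univ_nonempty fun α => matOpNorm (G α)

/-- The normalization `α₀ := (1 + ξ₁² + ξ₃²/2 + ξ₂²)^{1/2}` with `ξ₃ := ξ₁² − 1`. -/
noncomputable def ancNormalization (ξ₁ ξ₂ : ℝ) : ℝ :=
  Real.sqrt (1 + ξ₁ ^ 2 + (ξ₁ ^ 2 - 1) ^ 2 / 2 + ξ₂ ^ 2)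

/-- The ancilla measurement state
`m := (1/α₀)(e_0 + ξ₁ e_1 + (ξ₃/√2) e_2 + ξ₂ e_3)` on `ℂ⁴ = ℂ^{Option (Fin 3)}`,
with `none ↔ e_0` and `some 0, some 1, some 2 ↔ e_1, e_2, e_3`. -/
noncomputable def ancState (ξ₁ ξ₂ : ℝ) : Option (Fin 3) → ℂ :=
  fun a =>
    (((match a with
      | none => 1
      | some i => if i = 0 then ξ₁ else if i = 1 then (ξ₁ ^ 2 - 1) / Real.sqrt 2 else ξ₂)
      / ancNormalization ξ₁ ξ₂ : ℝ) : ℂ)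

/-- The readout `m† ⊗ I_N` as a matrix. -/
noncomputable def ancReadout {N : ℕ} (ξ₁ ξ₂ : ℝ) :
    Matrix (Fin N) (Option (Fin 3) × Fin N) ℂ :=
  Matrix.of fun i p => star (ancState ξ₁ ξ₂ p.1) * (if p.2 = i then 1 else 0)

/-- The embedding `e_0 ⊗ I_N` as a matrix. -/
noncomputable def ancE0Embed {N : ℕ} :
    Matrix (Option (Fin 3) × Fin N) (Fin N) ℂ :=
  Matrix.of fun p i =>
    (match p.1 with | none => (1 : ℂ) | some _ => 0) * (if p.2 = i then 1 else 0)

/-- The post-selected effective one-step map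
`F̃ := α₀ · (m† ⊗ I_N) U (e_0 ⊗ I_N) = ⟨m|U|e_0⟩ / ⟨m|e_0⟩`. -/
noncomputable def effStep {N : ℕ} (G : Fin 3 → Matrix (Fin N) (Fin N) ℂ)
    (ξ₁ ξ₂ : ℝ) : Matrix (Fin N) (Fin N) ℂ :=
  ((ancNormalization ξ₁ ξ₂ : ℝ) : ℂ) •
    ((ancReadout ξ₁ ξ₂ * NormedSpace.exp (repIntGen G) :
      Matrix (Fin N) (Option (Fin 3) × Fin N) ℂ) * ancE0Embed)

/-!
In `ℂ^{Option S} ⊗ ℂᴺ` the generator `Ω` only couples the `e₀` block with the `e_α` blocks, by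
`G α` one way and `-(G α)ᴴ` the other. Hence the `e₀` block column of `Ω ^ (2k)` is `(-R²) ^ k`
in the `e₀` block, and that of `Ω ^ (2k+1)` is `G α * (-R²) ^ k` in the `e_α` block. Read out
between `α₀ m†` and `e₀`, the degree-4 Taylor polynomial of `exp Ω` is therefore exactly
`Ξ + ξ₁ G₁ Λ + (ξ₃/√2) G₂ Λ + ξ₂ G₃ Λ`. The Taylor remainder is at most `‖Ω‖⁵ e^{‖Ω‖}` with
`‖Ω‖ ≤ 6g`, the readout and the embedding are contractions, and `α₀ ≤ 3`.
-/
open scoped Matrix.Norms.L2Operator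

def expPartialSum (𝕂 : Type*) {𝔸 : Type*} [Field 𝕂] [Ring 𝔸] [Algebra 𝕂 𝔸] (n : ℕ) (a : 𝔸) :
    𝔸 :=
  ∑ k ∈ Finset.range n, (k.factorial⁻¹ : 𝕂) • a ^ k

theorem norm_exp_sub_expPartialSum_le {𝕂 𝔸 : Type*} [RCLike 𝕂] [NormedRing 𝔸]
    [NormedAlgebra 𝕂 𝔸] [CompleteSpace 𝔸] (a : 𝔸) {n : ℕ} (hn : n ≠ 0) :
    ‖NormedSpace.exp a - expPartialSum 𝕂 n a‖ ≤ ‖a‖ ^ n * Real.exp ‖a‖ := by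
  have hterm (k : ℕ) :
      ‖((k + n).factorial⁻¹ : 𝕂) • a ^ (k + n)‖ ≤ ‖a‖ ^ n * (‖a‖ ^ k / k.factorial) := by
    rw [norm_smul, norm_inv, RCLike.norm_natCast]
    calc ((k + n).factorial : ℝ)⁻¹ * ‖a ^ (k + n)‖
        ≤ (k.factorial : ℝ)⁻¹ * ‖a‖ ^ (k + n) := by
          gcongr
          · exact Nat.le_add_right k n
          · exact norm_pow_le' a (by omega)
      _ = ‖a‖ ^ n * (‖a‖ ^ k / k.factorial) := by ring
  rw [expPartialSum, congrFun (NormedSpace.exp_eq_tsum 𝕂) a,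
    ← (NormedSpace.expSeries_summable' (𝕂 := 𝕂) a).sum_add_tsum_nat_add n, add_sub_cancel_left]
  calc ‖∑' k, ((k + n).factorial⁻¹ : 𝕂) • a ^ (k + n)‖
      ≤ ∑' k, ‖a‖ ^ n * (‖a‖ ^ k / k.factorial) :=
        tsum_of_norm_bounded ((Real.summable_pow_div_factorial ‖a‖).mul_left _).hasSum hterm
    _ = ‖a‖ ^ n * Real.exp ‖a‖ := by
        rw [tsum_mul_left, Real.exp_eq_exp_ℝ, NormedSpace.exp_eq_tsum_div]

theorem Matrix.l2_opNorm_one_le {n : Type*} [Fintype n] [DecidableEq n] :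
    ‖(1 : Matrix n n ℂ)‖ ≤ 1 := by
  rw [← Matrix.diagonal_one, Matrix.l2_opNorm_diagonal]
  exact (pi_norm_le_iff_of_nonneg zero_le_one).2 fun _ => by simp

def colKronOne (n : Type*) [DecidableEq n] {p : Type*} (v : p → ℂ) : Matrix (p × n) n ℂ :=
  of fun x j => v x.1 * (1 : Matrix n n ℂ) x.2 j

section colKronOne

variable {p n : Type*} [Fintype n] [DecidableEq n]

theorem conjTranspose_colKronOne_mul_self [Fintype p] (v : p → ℂ) :
    (colKronOne n v)ᴴ * colKronOne n v = (∑ c, star (v c) * v c) • (1 : Matrix n n ℂ) := by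
  ext i j
  simp only [colKronOne, Matrix.mul_apply, Fintype.sum_prod_type, Matrix.one_apply]
  rcases eq_or_ne i j with rfl | h
  · simp
  · simp [h, h.symm]

theorem l2_opNorm_colKronOne_sq_le [Fintype p] (v : p → ℂ) :
    ‖colKronOne n v‖ ^ 2 ≤ ∑ c, ‖v c‖ ^ 2 := by
  have hsq : ‖colKronOne n v‖ ^ 2 = ‖(∑ c, star (v c) * v c) • (1 : Matrix n n ℂ)‖ := by
    rw [sq, ← Matrix.l2_opNorm_conjTranspose_mul_self, conjTranspose_colKronOne_mul_self]
  rw [hsq, norm_smul]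
  calc ‖∑ c, star (v c) * v c‖ * ‖(1 : Matrix n n ℂ)‖ ≤ (∑ c, ‖star (v c) * v c‖) * 1 := by
        gcongr
        · exact norm_sum_le _ _
        · exact Matrix.l2_opNorm_one_le
    _ = ∑ c, ‖v c‖ ^ 2 := by simp [sq]

theorem l2_opNorm_colKronOne_le_one [Fintype p] {v : p → ℂ} (hv : ∑ c, ‖v c‖ ^ 2 = 1) :
    ‖colKronOne n v‖ ≤ 1 :=
  (pow_le_one_iff_of_nonneg (norm_nonneg _) two_ne_zero).1
    (hv ▸ l2_opNorm_colKronOne_sq_le v)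

theorem l2_opNorm_colKronOne_single_le [Fintype p] [DecidableEq p] (a : p) :
    ‖colKronOne n (Pi.single a (1 : ℂ))‖ ≤ 1 :=
  l2_opNorm_colKronOne_le_one (by rw [Fintype.sum_eq_single a fun c hc => by simp [hc]]; simp)

theorem single_kronecker_eq_colKronOne_mul [DecidableEq p] (a b : p) (A : Matrix n n ℂ) :
    Matrix.single a b (1 : ℂ) ⊗ₖ A =
      colKronOne n (Pi.single a 1) * A * (colKronOne n (Pi.single b 1))ᴴ := by
  ext ⟨c, i⟩ ⟨d, j⟩
  rcases eq_or_ne c a with rfl | hc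
  · rcases eq_or_ne d b with rfl | hd
    · simp [colKronOne, Matrix.mul_apply, Matrix.one_apply, apply_ite (starRingEnd ℂ)]
    · simp [colKronOne, Matrix.mul_apply, Pi.single_apply, hd, hd.symm]
  · simp [colKronOne, Matrix.mul_apply, Pi.single_apply, hc, hc.symm]

theorem l2_opNorm_single_kronecker_le [Fintype p] [DecidableEq p] (a b : p) (A : Matrix n n ℂ) :
    ‖Matrix.single a b (1 : ℂ) ⊗ₖ A‖ ≤ ‖A‖ := by
  rw [single_kronecker_eq_colKronOne_mul]
  calc _ ≤ ‖colKronOne n (Pi.single a (1 : ℂ))‖ * ‖A‖ * ‖(colKronOne n (Pi.single b (1 : ℂ)))ᴴ‖ :=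
        (Matrix.l2_opNorm_mul _ _).trans (by gcongr; exact Matrix.l2_opNorm_mul _ _)
    _ ≤ 1 * ‖A‖ * 1 := by
        rw [Matrix.l2_opNorm_conjTranspose]
        gcongr <;> exact l2_opNorm_colKronOne_single_le _
    _ = ‖A‖ := by ring

end colKronOne

def colBlock {S n : Type*} (a : Option S) :
    Matrix (Option S × n) (Option S × n) ℂ →ₗ[ℂ] Matrix n n ℂ where
  toFun M := of fun i j => M (a, i) (none, j)
  map_add' _ _ := rfl
  map_smul' _ _ := rfl

@[simp]
theorem colBlock_apply {S n : Type*} (a : Option S) (M : Matrix (Option S × n) (Option S × n) ℂ)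
    (i j : n) : colBlock a M i j = M (a, i) (none, j) :=
  rfl

section colBlock

variable {S : Type*} [Fintype S] [DecidableEq S] {N : ℕ} (G : S → Matrix (Fin N) (Fin N) ℂ)

theorem colBlock_some_repIntGen_mul (β : S) (M : Matrix (Option S × Fin N) (Option S × Fin N) ℂ) :
    colBlock (some β) (repIntGen G * M) = G β * colBlock none M := by
  ext i j
  simp [repIntGen, Matrix.mul_apply, Matrix.sum_apply, Matrix.single,
    Fintype.sum_prod_type]

theorem colBlock_none_repIntGen_mul (M : Matrix (Option S × Fin N) (Option S × Fin N) ℂ) :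
    colBlock none (repIntGen G * M) = -∑ α, (G α)ᴴ * colBlock (some α) M := by
  ext i j
  simp [repIntGen, Matrix.mul_apply, Matrix.sum_apply, Matrix.single,
    Fintype.sum_prod_type, Finset.sum_comm (γ := S)]

theorem colBlock_repIntGen_pow_even (k : ℕ) :
    colBlock none (repIntGen G ^ (2 * k)) = (-repIntR2 G) ^ k ∧
      ∀ β, colBlock (some β) (repIntGen G ^ (2 * k)) = 0 := by
  induction k with
  | zero => refine ⟨?_, fun β => ?_⟩ <;> ext i j <;> simp [Matrix.one_apply]
  | succ k ih =>
    rw [show 2 * (k + 1) = 2 * k + 1 + 1 by ring, pow_succ', pow_succ']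
    refine ⟨?_, fun β => ?_⟩
    · rw [colBlock_none_repIntGen_mul]
      simp_rw [colBlock_some_repIntGen_mul, ih.1, ← mul_assoc]
      rw [← Finset.sum_mul, pow_succ', neg_mul, repIntR2]
    · simp [colBlock_none_repIntGen_mul, colBlock_some_repIntGen_mul, ih.2]

theorem colBlock_repIntGen_pow_odd (k : ℕ) :
    colBlock none (repIntGen G ^ (2 * k + 1)) = 0 ∧
      ∀ β, colBlock (some β) (repIntGen G ^ (2 * k + 1)) = G β * (-repIntR2 G) ^ k := by
  obtain ⟨hnone, hsome⟩ := colBlock_repIntGen_pow_even G k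
  rw [pow_succ']
  exact ⟨by simp [colBlock_none_repIntGen_mul, hsome], fun β => by
    rw [colBlock_some_repIntGen_mul, hnone]⟩

theorem colBlock_none_expPartialSum_five :
    colBlock none (expPartialSum ℂ 5 (repIntGen G)) = repIntXi G := by
  have h0 := (colBlock_repIntGen_pow_even G 0).1
  have h1 := (colBlock_repIntGen_pow_odd G 0).1
  have h2 := (colBlock_repIntGen_pow_even G 1).1
  have h3 := (colBlock_repIntGen_pow_odd G 1).1
  have h4 := (colBlock_repIntGen_pow_even G 2).1
  simp only [expPartialSum, Finset.sum_range_succ, Finset.sum_range_zero]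
  norm_num at h0 h1 h2 h3 h4 ⊢
  rw [h0, h1, h2, h3, h4, repIntXi, sq]
  module

theorem colBlock_some_expPartialSum_five (β : S) :
    colBlock (some β) (expPartialSum ℂ 5 (repIntGen G)) = G β * repIntLam G := by
  have h0 := (colBlock_repIntGen_pow_even G 0).2 β
  have h1 := (colBlock_repIntGen_pow_odd G 0).2 β
  have h2 := (colBlock_repIntGen_pow_even G 1).2 β
  have h3 := (colBlock_repIntGen_pow_odd G 1).2 β
  have h4 := (colBlock_repIntGen_pow_even G 2).2 β
  simp only [expPartialSum, Finset.sum_range_succ, Finset.sum_range_zero]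
  norm_num at h0 h1 h2 h3 h4 ⊢
  rw [h0, h1, h2, h3, h4, repIntLam, mul_sub, mul_one, Matrix.mul_smul]
  module

end colBlock

theorem conjTranspose_colKronOne_mul_mul_colKronOne_single {S n : Type*} [Fintype S] [DecidableEq S]
    [Fintype n] [DecidableEq n] (v : Option S → ℂ) (M : Matrix (Option S × n) (Option S × n) ℂ) :
    (colKronOne n v)ᴴ * M * colKronOne n (Pi.single (none : Option S) (1 : ℂ)) =
      ∑ a, star (v a) • colBlock a M := by
  ext i j
  simp [colKronOne, Matrix.mul_apply, Matrix.sum_apply, Fintype.sum_prod_type, Matrix.one_apply,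
    Pi.single_apply, apply_ite (starRingEnd ℂ)]

section ancilla

variable {N : ℕ} (ξ₁ ξ₂ : ℝ)

theorem ancReadout_eq_conjTranspose_colKronOne :
    ancReadout (N := N) ξ₁ ξ₂ = (colKronOne (Fin N) (ancState ξ₁ ξ₂))ᴴ := by
  ext i ⟨a, j⟩
  simp [ancReadout, colKronOne, Matrix.one_apply, apply_ite (starRingEnd ℂ), eq_comm]

theorem ancE0Embed_eq_colKronOne_single :
    ancE0Embed (N := N) = colKronOne (Fin N) (Pi.single none 1) := by
  ext ⟨a, i⟩ j
  cases a <;> simp [ancE0Embed, colKronOne, Matrix.one_apply]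

theorem ancNormalization_pos : 0 < ancNormalization ξ₁ ξ₂ :=
  Real.sqrt_pos.2 (by positivity)

theorem sum_norm_ancState_sq : ∑ a, ‖ancState ξ₁ ξ₂ a‖ ^ 2 = 1 := by
  have hα : ancNormalization ξ₁ ξ₂ ^ 2 = 1 + ξ₁ ^ 2 + (ξ₁ ^ 2 - 1) ^ 2 / 2 + ξ₂ ^ 2 :=
    Real.sq_sqrt (by positivity)
  have hα0 := (ancNormalization_pos ξ₁ ξ₂).ne'
  simp only [Fintype.sum_option, Fin.sum_univ_three, ancState, Complex.norm_real,
    Real.norm_eq_abs, sq_abs]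
  norm_num [div_pow, Fin.ext_iff]
  field_simp
  rw [hα]
  ring

theorem l2_opNorm_ancReadout_le_one : ‖ancReadout (N := N) ξ₁ ξ₂‖ ≤ 1 := by
  rw [ancReadout_eq_conjTranspose_colKronOne, Matrix.l2_opNorm_conjTranspose]
  exact l2_opNorm_colKronOne_le_one (sum_norm_ancState_sq ξ₁ ξ₂)

theorem l2_opNorm_ancE0Embed_le_one : ‖ancE0Embed (N := N)‖ ≤ 1 := by
  rw [ancE0Embed_eq_colKronOne_single]
  exact l2_opNorm_colKronOne_single_le none

theorem l2_opNorm_ancReadout_mul_mul_ancE0Embed_le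
    (M : Matrix (Option (Fin 3) × Fin N) (Option (Fin 3) × Fin N) ℂ) :
    ‖ancReadout (N := N) ξ₁ ξ₂ * M * ancE0Embed (N := N)‖ ≤ ‖M‖ :=
  calc _ ≤ ‖ancReadout (N := N) ξ₁ ξ₂‖ * ‖M‖ * ‖ancE0Embed (N := N)‖ :=
        (Matrix.l2_opNorm_mul _ _).trans (by gcongr; exact Matrix.l2_opNorm_mul _ _)
    _ ≤ 1 * ‖M‖ * 1 := by
        gcongr
        exacts [l2_opNorm_ancReadout_le_one ξ₁ ξ₂, l2_opNorm_ancE0Embed_le_one]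
    _ = ‖M‖ := by ring

end ancilla

theorem ancNormalization_le_three {ξ₁ ξ₂ : ℝ} (h₁ : ξ₁ ^ 2 ≤ 3) (h₂ : ξ₂ ^ 2 ≤ 3) :
    ancNormalization ξ₁ ξ₂ ≤ 3 := by
  rw [ancNormalization, Real.sqrt_le_left (by norm_num)]
  nlinarith

theorem sq_le_three_of_mem {ξ : ℝ} (h : ξ ∈ ({0, Real.sqrt 3, -Real.sqrt 3} : Set ℝ)) :
    ξ ^ 2 ≤ 3 := by
  rcases h with rfl | rfl | rfl <;> simp

theorem l2_opNorm_le_gMax {S : Type*} [Fintype S] [Nonempty S] {N : ℕ}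
    (G : S → Matrix (Fin N) (Fin N) ℂ) (α : S) : ‖G α‖ ≤ gMax G :=
  Finset.le_sup' (fun α => matOpNorm (G α)) (Finset.mem_univ α)

theorem l2_opNorm_repIntGen_le {S : Type*} [Fintype S] [DecidableEq S] [Nonempty S] {N : ℕ}
    (G : S → Matrix (Fin N) (Fin N) ℂ) : ‖repIntGen G‖ ≤ 2 * Fintype.card S * gMax G := by
  calc ‖repIntGen G‖ ≤ ∑ α : S, 2 * gMax G := by
        refine (norm_sum_le _ _).trans (Finset.sum_le_sum fun α _ => (norm_sub_le _ _).trans ?_)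
        have h := l2_opNorm_single_kronecker_le (none : Option S) (some α) (G α)ᴴ
        rw [Matrix.l2_opNorm_conjTranspose] at h
        linarith [l2_opNorm_single_kronecker_le (some α) (none : Option S) (G α),
          l2_opNorm_le_gMax G α]
    _ = 2 * Fintype.card S * gMax G := by simp; ring

theorem ancNormalization_smul_ancReadout_mul_expPartialSum_mul {N : ℕ}
    (G : Fin 3 → Matrix (Fin N) (Fin N) ℂ) (ξ₁ ξ₂ : ℝ) :
    ((ancNormalization ξ₁ ξ₂ : ℝ) : ℂ) •
        (ancReadout (N := N) ξ₁ ξ₂ * expPartialSum ℂ 5 (repIntGen G) * ancE0Embed (N := N)) =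
      repIntXi G + ((ξ₁ : ℝ) : ℂ) • (G 0 * repIntLam G) +
        (((ξ₁ ^ 2 - 1) / Real.sqrt 2 : ℝ) : ℂ) • (G 1 * repIntLam G) +
        ((ξ₂ : ℝ) : ℂ) • (G 2 * repIntLam G) := by
  have hα : ((ancNormalization ξ₁ ξ₂ : ℝ) : ℂ) ≠ 0 := mod_cast (ancNormalization_pos ξ₁ ξ₂).ne'
  rw [ancReadout_eq_conjTranspose_colKronOne, ancE0Embed_eq_colKronOne_single,
    conjTranspose_colKronOne_mul_mul_colKronOne_single, Fintype.sum_option, Fin.sum_univ_three,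
    colBlock_none_expPartialSum_five, colBlock_some_expPartialSum_five,
    colBlock_some_expPartialSum_five, colBlock_some_expPartialSum_five]
  simp [ancState, smul_add, smul_smul, hα, mul_div_cancel₀, add_assoc]

theorem effStep_sub_eq_smul_remainder {N : ℕ} (G : Fin 3 → Matrix (Fin N) (Fin N) ℂ)
    (ξ₁ ξ₂ : ℝ) :
    effStep G ξ₁ ξ₂ -
        (repIntXi G + ((ξ₁ : ℝ) : ℂ) • (G 0 * repIntLam G) +
          (((ξ₁ ^ 2 - 1) / Real.sqrt 2 : ℝ) : ℂ) • (G 1 * repIntLam G) +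
          ((ξ₂ : ℝ) : ℂ) • (G 2 * repIntLam G)) =
      ((ancNormalization ξ₁ ξ₂ : ℝ) : ℂ) • (ancReadout (N := N) ξ₁ ξ₂ *
        (NormedSpace.exp (repIntGen G) - expPartialSum ℂ 5 (repIntGen G)) *
          ancE0Embed (N := N)) := by
  -- `effStep` multiplies by `ancE0Embed` with the `CStarMatrix` instance; restore the `Matrix` one.
  change ((ancNormalization ξ₁ ξ₂ : ℝ) : ℂ) •
    (ancReadout (N := N) ξ₁ ξ₂ * NormedSpace.exp (repIntGen G) * ancE0Embed (N := N)) - _ = _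
  rw [← ancNormalization_smul_ancReadout_mul_expPartialSum_mul, ← smul_sub, ← Matrix.sub_mul,
    ← Matrix.mul_sub]

/-- **Post-selected effective map of the two-qubit weak-measurement step.**
There is a universal constant `C > 0` such that whenever `g := max_α ‖G_α‖ ≤ 1` and
`ξ₁, ξ₂ ∈ {0, √3, −√3}`, with `ξ₃ := ξ₁² − 1`,
`‖F̃ − [Ξ + ξ₁ G₁Λ + (ξ₃/√2) G₂Λ + ξ₂ G₃Λ]‖ ≤ C g⁵`. -/
theorem effective_map_weak2 :
    ∃ C > 0, ∀ (N : ℕ) (G : Fin 3 → Matrix (Fin N) (Fin N) ℂ) (ξ₁ ξ₂ : ℝ),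
      ξ₁ ∈ ({0, Real.sqrt 3, -Real.sqrt 3} : Set ℝ) →
      ξ₂ ∈ ({0, Real.sqrt 3, -Real.sqrt 3} : Set ℝ) →
      gMax G ≤ 1 →
      matOpNorm
        (effStep G ξ₁ ξ₂ -
          (repIntXi G + ((ξ₁ : ℝ) : ℂ) • (G 0 * repIntLam G) +
            (((ξ₁ ^ 2 - 1) / Real.sqrt 2 : ℝ) : ℂ) • (G 1 * repIntLam G) +
            ((ξ₂ : ℝ) : ℂ) • (G 2 * repIntLam G))) ≤
        C * gMax G ^ 5 := by
  refine ⟨3 * 6 ^ 5 * Real.exp 6, by positivity, fun N G ξ₁ ξ₂ h₁ h₂ hg => ?_⟩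
  set g := gMax G
  have hg0 : 0 ≤ g := (norm_nonneg _).trans (l2_opNorm_le_gMax G 0)
  have hΩ : ‖repIntGen G‖ ≤ 6 * g := by
    simpa [show (2 * 3 : ℝ) = 6 by norm_num] using l2_opNorm_repIntGen_le G
  rw [matOpNorm, Matrix.l2_opNorm_toEuclideanCLM, effStep_sub_eq_smul_remainder, norm_smul,
    Complex.norm_real, Real.norm_of_nonneg (ancNormalization_pos ξ₁ ξ₂).le]
  calc _ ≤ 3 * ‖NormedSpace.exp (repIntGen G) - expPartialSum ℂ 5 (repIntGen G)‖ := by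
        gcongr
        · exact ancNormalization_le_three (sq_le_three_of_mem h₁) (sq_le_three_of_mem h₂)
        · exact l2_opNorm_ancReadout_mul_mul_ancE0Embed_le ξ₁ ξ₂ _
    _ ≤ 3 * (‖repIntGen G‖ ^ 5 * Real.exp ‖repIntGen G‖) := by
        gcongr
        exact norm_exp_sub_expPartialSum_le _ (by norm_num)
    _ ≤ 3 * ((6 * g) ^ 5 * Real.exp 6) := by
        gcongr
        linarith
    _ = 3 * 6 ^ 5 * Real.exp 6 * g ^ 5 := by ring
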